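/- arXiv:1808.06395 — 7 statements merged into one kernel-verified Lean document; each statement's English description precedes it below -/
import Mathlib

section
/- Let x1, x2 be distinct nonzero complex numbers, G1 = diag(x1, x2), and G2 = (1/(x1-x2)) * [[-x2^2, -x1 x2],[x1^2 - x1 x2 + x2^2, x1^2]]. Then (G1 G2)^3 = -(x1 x2)^3 · I. -/
open Matrix

/-! The product `M = G1 * G2` has trace `t = x1 * x2` and determinant `t ^ 2`. By Cayley–Hamilton
`M ^ 2 = t • M - t ^ 2 • 1`, and multiplying once more by `M` gives `M ^ 3 = -t ^ 3 • 1`: the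
eigenvalues of `M` are `t` times the two primitive sixth roots of unity. -/

namespace Matrix

variable {R : Type*} [CommRing R]

theorem sq_fin_two_eq_trace_smul_sub_det_smul (M : Matrix (Fin 2) (Fin 2) R) :
    M ^ 2 = M.trace • M - M.det • (1 : Matrix (Fin 2) (Fin 2) R) := by
  ext i j
  fin_cases i <;> fin_cases j <;> simp [sq, mul_apply, trace_fin_two, det_fin_two] <;> ring

theorem pow_three_fin_two_of_det_eq_trace_sq {M : Matrix (Fin 2) (Fin 2) R}
    (h : M.det = M.trace ^ 2) : M ^ 3 = -M.trace ^ 3 • (1 : Matrix (Fin 2) (Fin 2) R) := by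
  have hsq : M ^ 2 = M.trace • M - M.trace ^ 2 • 1 := h ▸ sq_fin_two_eq_trace_smul_sub_det_smul M
  rw [pow_succ, hsq, sub_mul, smul_mul_assoc, smul_mul_assoc, one_mul, ← sq, hsq]
  module

end Matrix

theorem rep_dim2_central_general (x1 x2 : ℂ) (h12 : x1 ≠ x2) :
    let G1 : Matrix (Fin 2) (Fin 2) ℂ := !![x1, 0; 0, x2]
    let G2 : Matrix (Fin 2) (Fin 2) ℂ :=
      (x1 - x2)⁻¹ • !![-x2 ^ 2, -(x1 * x2); x1 ^ 2 - x1 * x2 + x2 ^ 2, x1 ^ 2]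
    (G1 * G2) ^ 3 = (-(x1 * x2) ^ 3) • (1 : Matrix (Fin 2) (Fin 2) ℂ) := by
  intro G1 G2
  have hd : x1 - x2 ≠ 0 := sub_ne_zero.mpr h12
  have htrace : (G1 * G2).trace = x1 * x2 := by
    simp [G1, G2, trace_fin_two]
    field_simp
    ring
  have hdet : (G1 * G2).det = (x1 * x2) ^ 2 := by
    simp [G1, G2, det_fin_two_of]
    field_simp
    ring
  rw [pow_three_fin_two_of_det_eq_trace_sq (by rw [hdet, htrace]), htrace]

theorem rep_dim2_central (x1 x2 : ℂ) (h1 : x1 ≠ 0) (h2 : x2 ≠ 0) (h12 : x1 ≠ x2) :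
    let G1 : Matrix (Fin 2) (Fin 2) ℂ := !![x1, 0; 0, x2]
    let G2 : Matrix (Fin 2) (Fin 2) ℂ :=
      (x1 - x2)⁻¹ • !![-x2 ^ 2, -(x1 * x2); x1 ^ 2 - x1 * x2 + x2 ^ 2, x1 ^ 2]
    (G1 * G2) ^ 3 = (-(x1 * x2) ^ 3) • (1 : Matrix (Fin 2) (Fin 2) ℂ) :=
  rep_dim2_central_general x1 x2 h12
end

section
/- Let x1, x2 be distinct nonzero complex numbers with x1^2 - x1 x2 + x2^2 ≠ 0. Then the pair of matrices G1 = diag(x1, x2) and G2 = (1/(x1-x2)) * [[-x2^2, -x1 x2],[x1^2 - x1 x2 + x2^2, x1^2]] has no common nontrivial invariant subspace of ℂ^2; equivalently, the subalgebra of 2×2 matrices generated by G1 and G2 is all of M_2(ℂ). -/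
open Matrix

theorem rep_dim2_irreducible (x1 x2 : ℂ) (h1 : x1 ≠ 0) (h2 : x2 ≠ 0) (h12 : x1 ≠ x2)
    (hI : x1 ^ 2 - x1 * x2 + x2 ^ 2 ≠ 0) :
    let G1 : Matrix (Fin 2) (Fin 2) ℂ := !![x1, 0; 0, x2]
    let G2 : Matrix (Fin 2) (Fin 2) ℂ :=
      (x1 - x2)⁻¹ • !![-x2 ^ 2, -(x1 * x2); x1 ^ 2 - x1 * x2 + x2 ^ 2, x1 ^ 2]
    ∀ W : Submodule ℂ (Fin 2 → ℂ),
      W.map G1.mulVecLin ≤ W → W.map G2.mulVecLin ≤ W → W = ⊥ ∨ W = ⊤ := by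
  intro G1 G2 W hW1 hW2
  by_cases hbot : W = ⊥
  · exact Or.inl hbot
  right
  have hG1 : ∀ v ∈ W, G1.mulVec v ∈ W := fun v hv => hW1 ⟨v, hv, rfl⟩
  have hG2 : ∀ v ∈ W, G2.mulVec v ∈ W := fun v hv => hW2 ⟨v, hv, rfl⟩
  have hsub : x2 - x1 ≠ 0 := sub_ne_zero.mpr (Ne.symm h12)
  have hsub' : x1 - x2 ≠ 0 := sub_ne_zero.mpr h12
  -- step0 : vector with nonzero first coord gives e0 ∈ W
  have step0 : ∀ v ∈ W, v 0 ≠ 0 → (![1,0] : Fin 2 → ℂ) ∈ W := by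
    intro v hv hv0
    have hmem := W.sub_mem (W.smul_mem x2 hv) (hG1 v hv)
    have heq : x2 • v - G1.mulVec v = (v 0 * (x2 - x1)) • ![1,0] := by
      funext i
      fin_cases i <;>
        simp [G1, mulVec, dotProduct, Fin.sum_univ_two] <;> ring
    rw [heq] at hmem
    exact (W.smul_mem_iff (mul_ne_zero hv0 hsub)).mp hmem
  have step1 : ∀ v ∈ W, v 1 ≠ 0 → (![0,1] : Fin 2 → ℂ) ∈ W := by
    intro v hv hv1
    have hmem := W.sub_mem (W.smul_mem x1 hv) (hG1 v hv)
    have heq : x1 • v - G1.mulVec v = (v 1 * (x1 - x2)) • ![0,1] := by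
      funext i
      fin_cases i <;>
        simp [G1, mulVec, dotProduct, Fin.sum_univ_two] <;> ring
    rw [heq] at hmem
    exact (W.smul_mem_iff (mul_ne_zero hv1 hsub')).mp hmem
  -- e0 ∈ W → e1 ∈ W and conversely
  have e01 : (![1,0] : Fin 2 → ℂ) ∈ W → (![0,1] : Fin 2 → ℂ) ∈ W := by
    intro h0
    have hv := hG2 _ h0
    apply step1 _ hv
    simp [G2, mulVec, dotProduct, Fin.sum_univ_two]
    exact ⟨hsub', hI⟩
  have e10 : (![0,1] : Fin 2 → ℂ) ∈ W → (![1,0] : Fin 2 → ℂ) ∈ W := by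
    intro h1'
    have hv := hG2 _ h1'
    apply step0 _ hv
    simp [G2, mulVec, dotProduct, Fin.sum_univ_two]
    exact ⟨hsub', h1, h2⟩
  -- get both basis vectors in W
  obtain ⟨v, hv, hvne⟩ := Submodule.exists_mem_ne_zero_of_ne_bot hbot
  have hboth : (![1,0] : Fin 2 → ℂ) ∈ W ∧ (![0,1] : Fin 2 → ℂ) ∈ W := by
    by_cases hv0 : v 0 ≠ 0
    · have h0 := step0 v hv hv0
      exact ⟨h0, e01 h0⟩
    · push_neg at hv0
      have hv1 : v 1 ≠ 0 := by
        intro hv1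
        apply hvne
        funext i; fin_cases i <;> simp [hv0, hv1]
      have h1' := step1 v hv hv1
      exact ⟨e10 h1', h1'⟩
  refine le_antisymm le_top ?_
  intro u _
  have hu : u = u 0 • (![1,0] : Fin 2 → ℂ) + u 1 • ![0,1] := by
    funext i; fin_cases i <;> simp
  rw [hu]
  exact W.add_mem (W.smul_mem _ hboth.1) (W.smul_mem _ hboth.2)
end

section
/- Let x1, x2 be distinct nonzero complex numbers with x1^2 - x1 x2 + x2^2 = 0. Then the matrices G1 = diag(x1, x2) and G2 = (1/(x1-x2)) * [[-x2^2, -x1 x2],[x1^2 - x1 x2 + x2^2, x1^2]] have a common invariant 1-dimensional subspace, namely the span of (1,0), but they have no common invariant subspace complementary to it (the pair is reducible but indecomposable). -/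
open Matrix

theorem rep_dim2_indecomposable (x1 x2 : ℂ) (h1 : x1 ≠ 0) (h2 : x2 ≠ 0) (h12 : x1 ≠ x2)
    (hI : x1 ^ 2 - x1 * x2 + x2 ^ 2 = 0) :
    let G1 : Matrix (Fin 2) (Fin 2) ℂ := !![x1, 0; 0, x2]
    let G2 : Matrix (Fin 2) (Fin 2) ℂ :=
      (x1 - x2)⁻¹ • !![-x2 ^ 2, -(x1 * x2); x1 ^ 2 - x1 * x2 + x2 ^ 2, x1 ^ 2]
    let L : Submodule ℂ (Fin 2 → ℂ) := Submodule.span ℂ {![(1 : ℂ), 0]}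
    (L.map G1.mulVecLin ≤ L ∧ L.map G2.mulVecLin ≤ L) ∧
      ∀ W : Submodule ℂ (Fin 2 → ℂ),
        W.map G1.mulVecLin ≤ W → W.map G2.mulVecLin ≤ W → ¬ IsCompl L W := by
  intro G1 G2 L
  have hx12 : x1 - x2 ≠ 0 := sub_ne_zero.mpr h12
  have he0 : (![1, 0] : Fin 2 → ℂ) ∈ L := Submodule.subset_span rfl
  have hG1e0 : G1.mulVec ![1, 0] = x1 • ![1, 0] := by
    funext i; fin_cases i <;> simp [G1, Matrix.mulVec, dotProduct]
  have hG2e0 : G2.mulVec ![1, 0] = ((x1 - x2)⁻¹ * (-x2 ^ 2)) • ![1, 0] := by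
    funext i; fin_cases i <;>
      simp [G2, Matrix.mulVec, dotProduct, hI]
  have hG2e1 : G2.mulVec ![0, 1] = (x1 - x2)⁻¹ • ![-(x1 * x2), x1 ^ 2] := by
    funext i; fin_cases i <;>
      simp [G2, Matrix.mulVec, dotProduct]
  refine ⟨⟨?_, ?_⟩, ?_⟩
  · rw [Submodule.map_le_iff_le_comap, Submodule.span_le]
    intro v hv
    simp only [Set.mem_singleton_iff] at hv
    subst hv
    simp only [SetLike.mem_coe, Submodule.mem_comap, mulVecLin_apply, hG1e0]
    exact L.smul_mem _ he0
  · rw [Submodule.map_le_iff_le_comap, Submodule.span_le]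
    intro v hv
    simp only [Set.mem_singleton_iff] at hv
    subst hv
    simp only [SetLike.mem_coe, Submodule.mem_comap, mulVecLin_apply, hG2e0]
    exact L.smul_mem _ he0
  · intro W hW1 hW2 hc
    have htop : (![0, 1] : Fin 2 → ℂ) ∈ L ⊔ W := by
      rw [hc.codisjoint.eq_top]; trivial
    rcases Submodule.mem_sup.mp htop with ⟨y, hy, z, hz, hyz⟩
    rcases Submodule.mem_span_singleton.mp hy with ⟨c, rfl⟩
    have hzval : z = ![-c, 1] := by
      have : z = ![0, 1] - c • ![1, 0] := by rw [← hyz]; abel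
      rw [this]; funext i; fin_cases i <;> simp
    -- G1 z ∈ W
    have hG1z : G1.mulVec z ∈ W := hW1 ⟨z, hz, rfl⟩
    have hu : x2 • z - G1.mulVec z ∈ W := W.sub_mem (W.smul_mem _ hz) hG1z
    have huval : x2 • z - G1.mulVec z = ((x2 - x1) * (-c)) • ![1, 0] := by
      rw [hzval]; funext i; fin_cases i <;>
        simp [G1, Matrix.mulVec, dotProduct] <;> ring
    have huL : x2 • z - G1.mulVec z ∈ L := by
      rw [huval]; exact L.smul_mem _ he0
    have hu0 : x2 • z - G1.mulVec z = 0 :=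
      (Submodule.disjoint_def.mp hc.disjoint) _ huL hu
    have hc0 : c = 0 := by
      have := congrFun (huval ▸ hu0) 0
      simp at this
      rcases this with h | h
      · exact absurd (by rw [sub_eq_zero] at h; exact h.symm) h12
      · exact h
    subst hc0
    have hze1 : z = ![0, 1] := by rw [hzval]; funext i; fin_cases i <;> simp
    have hG2z : G2.mulVec z ∈ W := hW2 ⟨z, hz, rfl⟩
    have hv : (x1 - x2) • G2.mulVec z - x1 ^ 2 • z ∈ W :=
      W.sub_mem (W.smul_mem _ hG2z) (W.smul_mem _ hz)
    have hvval : (x1 - x2) • G2.mulVec z - x1 ^ 2 • z = (-(x1 * x2)) • ![1, 0] := by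
      rw [hze1, hG2e1]; funext i; fin_cases i <;> simp <;> field_simp <;> ring
    have hvL : (x1 - x2) • G2.mulVec z - x1 ^ 2 • z ∈ L := by
      rw [hvval]; exact L.smul_mem _ he0
    have hv0 : (x1 - x2) • G2.mulVec z - x1 ^ 2 • z = 0 :=
      (Submodule.disjoint_def.mp hc.disjoint) _ hvL hv
    have : -(x1 * x2) = 0 := by
      have := congrFun (hvval ▸ hv0) 0
      simpa using this
    simp [h1, h2] at this
end

section
/- Let x1, x2, x3 be pairwise distinct nonzero complex numbers, G1 = diag(x1,x2,x3), and G2 the 3×3 matrix whose entry in row i, column j is given by G2[i][i] = x_j x_k (x_j + x_k)/Δ_i, and for j ≠ i, G2[i][j] = x_k (x_i^2 + x_j x_k)/Δ_i, where {i,j,k} = {1,2,3} and Δ_i = ∏_{l ≠ i} (x_l - x_i). Then G1 G2 G1 = G2 G1 G2. -/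
open Matrix

set_option maxHeartbeats 2000000 in
theorem rep_dim3_braid (x1 x2 x3 : ℂ) (h1 : x1 ≠ 0) (h2 : x2 ≠ 0) (h3 : x3 ≠ 0)
    (h12 : x1 ≠ x2) (h13 : x1 ≠ x3) (h23 : x2 ≠ x3) :
    let G1 : Matrix (Fin 3) (Fin 3) ℂ := !![x1, 0, 0; 0, x2, 0; 0, 0, x3]
    let Δ1 : ℂ := (x2 - x1) * (x3 - x1)
    let Δ2 : ℂ := (x1 - x2) * (x3 - x2)
    let Δ3 : ℂ := (x1 - x3) * (x2 - x3)
    let G2 : Matrix (Fin 3) (Fin 3) ℂ :=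
      !![x2 * x3 * (x2 + x3) / Δ1, x3 * (x1 ^ 2 + x2 * x3) / Δ1, x2 * (x1 ^ 2 + x2 * x3) / Δ1;
         x3 * (x2 ^ 2 + x1 * x3) / Δ2, x1 * x3 * (x1 + x3) / Δ2, x1 * (x2 ^ 2 + x1 * x3) / Δ2;
         x2 * (x3 ^ 2 + x1 * x2) / Δ3, x1 * (x3 ^ 2 + x1 * x2) / Δ3, x1 * x2 * (x1 + x2) / Δ3]
    G1 * G2 * G1 = G2 * G1 * G2 := by
  intro G1 Δ1 Δ2 Δ3 G2
  have d12 : x2 - x1 ≠ 0 := sub_ne_zero.mpr (Ne.symm h12)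
  have d13 : x3 - x1 ≠ 0 := sub_ne_zero.mpr (Ne.symm h13)
  have d21 : x1 - x2 ≠ 0 := sub_ne_zero.mpr h12
  have d23 : x3 - x2 ≠ 0 := sub_ne_zero.mpr (Ne.symm h23)
  have d31 : x1 - x3 ≠ 0 := sub_ne_zero.mpr h13
  have d32 : x2 - x3 ≠ 0 := sub_ne_zero.mpr h23
  have hd1 : Δ1 = (x2 - x1) * (x3 - x1) := rfl
  have hd2 : Δ2 = (x1 - x2) * (x3 - x2) := rfl
  have hd3 : Δ3 = (x1 - x3) * (x2 - x3) := rfl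
  have hG2 : G2 = !![x2 * x3 * (x2 + x3) / Δ1, x3 * (x1 ^ 2 + x2 * x3) / Δ1, x2 * (x1 ^ 2 + x2 * x3) / Δ1;
         x3 * (x2 ^ 2 + x1 * x3) / Δ2, x1 * x3 * (x1 + x3) / Δ2, x1 * (x2 ^ 2 + x1 * x3) / Δ2;
         x2 * (x3 ^ 2 + x1 * x2) / Δ3, x1 * (x3 ^ 2 + x1 * x2) / Δ3, x1 * x2 * (x1 + x2) / Δ3] := rfl
  clear_value Δ1 Δ2 Δ3
  have hΔ1 : Δ1 ≠ 0 := hd1 ▸ mul_ne_zero d12 d13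
  have hΔ2 : Δ2 ≠ 0 := hd2 ▸ mul_ne_zero d21 d23
  have hΔ3 : Δ3 ≠ 0 := hd3 ▸ mul_ne_zero d31 d32
  ext i j
  fin_cases i <;> fin_cases j <;>
    simp only [hG2, G1, Matrix.mul_apply, Fin.sum_univ_three, Matrix.cons_val', Matrix.cons_val_zero,
      Matrix.cons_val_one, Matrix.head_cons, Matrix.head_fin_const, Matrix.cons_val_fin_one,
      Matrix.empty_val', Matrix.cons_val_two, Matrix.tail_cons, Fin.isValue, Matrix.of_apply,
      Fin.zero_eta, Fin.mk_one, Fin.reduceFinMk, Matrix.cons_val] <;>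
    field_simp <;> rw [hd1, hd2, hd3] <;> ring
end

section
/- Let x1, x2, x3 be pairwise distinct nonzero complex numbers and let G2 be the explicit 3×3 matrix of the 3-dimensional representation (entries as in the previous statement). Then (G2 - x1 I)(G2 - x2 I)(G2 - x3 I) = 0. -/
open Matrix
set_option maxHeartbeats 4000000 in
theorem rep_dim3_minpoly (x1 x2 x3 : ℂ) (h1 : x1 ≠ 0) (h2 : x2 ≠ 0) (h3 : x3 ≠ 0)
    (h12 : x1 ≠ x2) (h13 : x1 ≠ x3) (h23 : x2 ≠ x3) :
    let Δ1 : ℂ := (x2 - x1) * (x3 - x1)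
    let Δ2 : ℂ := (x1 - x2) * (x3 - x2)
    let Δ3 : ℂ := (x1 - x3) * (x2 - x3)
    let G2 : Matrix (Fin 3) (Fin 3) ℂ :=
      !![x2 * x3 * (x2 + x3) / Δ1, x3 * (x1 ^ 2 + x2 * x3) / Δ1, x2 * (x1 ^ 2 + x2 * x3) / Δ1;
         x3 * (x2 ^ 2 + x1 * x3) / Δ2, x1 * x3 * (x1 + x3) / Δ2, x1 * (x2 ^ 2 + x1 * x3) / Δ2;
         x2 * (x3 ^ 2 + x1 * x2) / Δ3, x1 * (x3 ^ 2 + x1 * x2) / Δ3, x1 * x2 * (x1 + x2) / Δ3]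
    (G2 - x1 • (1 : Matrix (Fin 3) (Fin 3) ℂ)) * (G2 - x2 • (1 : Matrix (Fin 3) (Fin 3) ℂ)) *
      (G2 - x3 • (1 : Matrix (Fin 3) (Fin 3) ℂ)) = 0 := by
  intro Δ1 Δ2 Δ3 G2
  have d12 : x1 - x2 ≠ 0 := sub_ne_zero.mpr h12
  have d21 : x2 - x1 ≠ 0 := sub_ne_zero.mpr h12.symm
  have d13 : x1 - x3 ≠ 0 := sub_ne_zero.mpr h13
  have d31 : x3 - x1 ≠ 0 := sub_ne_zero.mpr h13.symm
  have d23 : x2 - x3 ≠ 0 := sub_ne_zero.mpr h23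
  have d32 : x3 - x2 ≠ 0 := sub_ne_zero.mpr h23.symm
  set D : ℂ := (x1 - x2) * ((x2 - x3) * (x3 - x1)) with hDdef
  have hD : D ≠ 0 := mul_ne_zero d12 (mul_ne_zero d23 d31)
  -- N y : the polynomial matrix D • (G2 - y • 1)
  have key : ∀ y : ℂ, G2 - y • (1 : Matrix (Fin 3) (Fin 3) ℂ) = D⁻¹ •
      !![-(x2 - x3) * (x2 * x3 * (x2 + x3)) - y * D, -(x2 - x3) * (x3 * (x1 ^ 2 + x2 * x3)),
           -(x2 - x3) * (x2 * (x1 ^ 2 + x2 * x3));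
         -(x3 - x1) * (x3 * (x2 ^ 2 + x1 * x3)), -(x3 - x1) * (x1 * x3 * (x1 + x3)) - y * D,
           -(x3 - x1) * (x1 * (x2 ^ 2 + x1 * x3));
         -(x1 - x2) * (x2 * (x3 ^ 2 + x1 * x2)), -(x1 - x2) * (x1 * (x3 ^ 2 + x1 * x2)),
           -(x1 - x2) * (x1 * x2 * (x1 + x2)) - y * D] := by
    intro y
    ext i j
    fin_cases i <;> fin_cases j <;>
      · simp [G2, Δ1, Δ2, Δ3, Matrix.one_apply]
        field_simp
        ring
  rw [key x1, key x2, key x3]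
  simp only [smul_mul_assoc, mul_smul_comm]
  rw [Matrix.mul_fin_three, Matrix.mul_fin_three]
  have : ∀ M : Matrix (Fin 3) (Fin 3) ℂ, M = 0 → D⁻¹ • (D⁻¹ • (D⁻¹ • M)) = 0 := by
    intro M hM; rw [hM]; simp
  apply this
  ext i j
  fin_cases i <;> fin_cases j <;>
    · simp only [cons_val', cons_val_zero, cons_val_one, head_cons, head_fin_const, empty_val',
        cons_val_fin_one, of_apply, Fin.isValue, Matrix.zero_apply]
      rw [hDdef]
      ring_nf
      simp [Matrix.vecHead, Matrix.vecTail]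
end

section
/- Let x1, x2, x3 be pairwise distinct nonzero complex numbers, G1 = diag(x1,x2,x3), and G2 the explicit 3×3 matrix of the 3-dimensional representation. Then (G1 G2)^3 = (x1 x2 x3)^2 · I. -/
open Matrix

set_option maxHeartbeats 1000000 in
theorem rep_dim3_central (x1 x2 x3 : ℂ) (h1 : x1 ≠ 0) (h2 : x2 ≠ 0) (h3 : x3 ≠ 0)
    (h12 : x1 ≠ x2) (h13 : x1 ≠ x3) (h23 : x2 ≠ x3) :
    let G1 : Matrix (Fin 3) (Fin 3) ℂ := !![x1, 0, 0; 0, x2, 0; 0, 0, x3]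
    let Δ1 : ℂ := (x2 - x1) * (x3 - x1)
    let Δ2 : ℂ := (x1 - x2) * (x3 - x2)
    let Δ3 : ℂ := (x1 - x3) * (x2 - x3)
    let G2 : Matrix (Fin 3) (Fin 3) ℂ :=
      !![x2 * x3 * (x2 + x3) / Δ1, x3 * (x1 ^ 2 + x2 * x3) / Δ1, x2 * (x1 ^ 2 + x2 * x3) / Δ1;
         x3 * (x2 ^ 2 + x1 * x3) / Δ2, x1 * x3 * (x1 + x3) / Δ2, x1 * (x2 ^ 2 + x1 * x3) / Δ2;
         x2 * (x3 ^ 2 + x1 * x2) / Δ3, x1 * (x3 ^ 2 + x1 * x2) / Δ3, x1 * x2 * (x1 + x2) / Δ3]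
    (G1 * G2) ^ 3 = ((x1 * x2 * x3) ^ 2) • (1 : Matrix (Fin 3) (Fin 3) ℂ) := by
  intro G1 Δ1 Δ2 Δ3 G2
  have d21 : x2 - x1 ≠ 0 := sub_ne_zero.mpr h12.symm
  have d31 : x3 - x1 ≠ 0 := sub_ne_zero.mpr h13.symm
  have d32 : x3 - x2 ≠ 0 := sub_ne_zero.mpr h23.symm
  set c : ℂ := (x2 - x1) * ((x3 - x1) * (x3 - x2)) with hc_def
  have hc : c ≠ 0 := mul_ne_zero d21 (mul_ne_zero d31 d32)
  set N : Matrix (Fin 3) (Fin 3) ℂ :=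
    !![(x3 - x2) * x1 * (x2 * x3 * (x2 + x3)), (x3 - x2) * x1 * (x3 * (x1 ^ 2 + x2 * x3)),
         (x3 - x2) * x1 * (x2 * (x1 ^ 2 + x2 * x3));
       (x1 - x3) * x2 * (x3 * (x2 ^ 2 + x1 * x3)), (x1 - x3) * x2 * (x1 * x3 * (x1 + x3)),
         (x1 - x3) * x2 * (x1 * (x2 ^ 2 + x1 * x3));
       (x2 - x1) * x3 * (x2 * (x3 ^ 2 + x1 * x2)), (x2 - x1) * x3 * (x1 * (x3 ^ 2 + x1 * x2)),
         (x2 - x1) * x3 * (x1 * x2 * (x1 + x2))] with hN_def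
  have d12 : x1 - x2 ≠ 0 := sub_ne_zero.mpr h12
  have d13 : x1 - x3 ≠ 0 := sub_ne_zero.mpr h13
  have d23 : x2 - x3 ≠ 0 := sub_ne_zero.mpr h23
  have hΔ1 : Δ1 ≠ 0 := mul_ne_zero d21 d31
  have hΔ2 : Δ2 ≠ 0 := mul_ne_zero d12 d32
  have hΔ3 : Δ3 ≠ 0 := mul_ne_zero d13 d23
  have hM : G1 * G2 = c⁻¹ • N := by
    ext i j
    fin_cases i <;> fin_cases j <;>
      · simp [G1, G2, N, Matrix.mul_apply, Fin.sum_univ_succ]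
        rw [eq_inv_mul_iff_mul_eq₀ hc]
        field_simp [hΔ1, hΔ2, hΔ3]
        simp only [Δ1, Δ2, Δ3, hc_def]
        ring
  have hN3 : N ^ 3 = (c ^ 3 * (x1 * x2 * x3) ^ 2) • (1 : Matrix (Fin 3) (Fin 3) ℂ) := by
    rw [pow_succ, pow_succ, pow_one, hN_def, Matrix.mul_fin_three, Matrix.mul_fin_three]
    ext i j
    fin_cases i <;> fin_cases j <;>
      · simp [Matrix.one_apply, hc_def]
        ring
  rw [hM, smul_pow, hN3, smul_smul, inv_pow, inv_mul_cancel_left₀ (pow_ne_zero 3 hc)]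
end

section
/- Let x1, x2, x3 be pairwise distinct nonzero complex numbers, and consider the 3×3 matrices G1 = diag(x1,x2,x3) and G2 of the 3-dimensional representation. If x_i^2 + x_j x_k ≠ 0 for every choice of pairwise distinct i,j,k ∈ {1,2,3}, then no nonzero proper subspace of ℂ^3 is invariant under both G1 and G2. -/
open Matrix

theorem rep_dim3_irreducible (x1 x2 x3 : ℂ) (h1 : x1 ≠ 0) (h2 : x2 ≠ 0) (h3 : x3 ≠ 0)
    (h12 : x1 ≠ x2) (h13 : x1 ≠ x3) (h23 : x2 ≠ x3)
    (hI1 : x1 ^ 2 + x2 * x3 ≠ 0) (hI2 : x2 ^ 2 + x1 * x3 ≠ 0) (hI3 : x3 ^ 2 + x1 * x2 ≠ 0) :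
    let G1 : Matrix (Fin 3) (Fin 3) ℂ := !![x1, 0, 0; 0, x2, 0; 0, 0, x3]
    let Δ1 : ℂ := (x2 - x1) * (x3 - x1)
    let Δ2 : ℂ := (x1 - x2) * (x3 - x2)
    let Δ3 : ℂ := (x1 - x3) * (x2 - x3)
    let G2 : Matrix (Fin 3) (Fin 3) ℂ :=
      !![x2 * x3 * (x2 + x3) / Δ1, x3 * (x1 ^ 2 + x2 * x3) / Δ1, x2 * (x1 ^ 2 + x2 * x3) / Δ1;
         x3 * (x2 ^ 2 + x1 * x3) / Δ2, x1 * x3 * (x1 + x3) / Δ2, x1 * (x2 ^ 2 + x1 * x3) / Δ2;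
         x2 * (x3 ^ 2 + x1 * x2) / Δ3, x1 * (x3 ^ 2 + x1 * x2) / Δ3, x1 * x2 * (x1 + x2) / Δ3]
    ∀ W : Submodule ℂ (Fin 3 → ℂ),
      W.map G1.mulVecLin ≤ W → W.map G2.mulVecLin ≤ W → W = ⊥ ∨ W = ⊤ := by
  intro G1 Δ1 Δ2 Δ3 G2 W hW1 hW2
  by_cases hbot : W = ⊥
  · left; exact hbot
  right
  have d12 : x1 - x2 ≠ 0 := sub_ne_zero.mpr h12
  have d13 : x1 - x3 ≠ 0 := sub_ne_zero.mpr h13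
  have d23 : x2 - x3 ≠ 0 := sub_ne_zero.mpr h23
  have d21 : x2 - x1 ≠ 0 := sub_ne_zero.mpr h12.symm
  have d31 : x3 - x1 ≠ 0 := sub_ne_zero.mpr h13.symm
  have d32 : x3 - x2 ≠ 0 := sub_ne_zero.mpr h23.symm
  have hm1 : ∀ v ∈ W, G1.mulVec v ∈ W := fun v hv => hW1 ⟨v, hv, rfl⟩
  have hm2 : ∀ v ∈ W, G2.mulVec v ∈ W := fun v hv => hW2 ⟨v, hv, rfl⟩
  have hG1v : ∀ v : Fin 3 → ℂ, G1.mulVec v = ![x1 * v 0, x2 * v 1, x3 * v 2] := by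
    intro v
    funext j
    fin_cases j <;> simp [G1, Matrix.mulVec, dotProduct, Fin.sum_univ_three]
  -- from a vector with nonzero i-th coordinate, get the i-th basis vector
  have key : ∀ v ∈ W, ∀ i : Fin 3, v i ≠ 0 → (Pi.single i 1 : Fin 3 → ℂ) ∈ W := by
    intro v hv i hvi
    have hv1 := hm1 v hv
    have hv2 := hm1 _ hv1
    have extract : ∀ a b : ℂ, G1.mulVec (G1.mulVec v) - (a + b) • G1.mulVec v + (a * b) • v ∈ W :=
      fun a b => add_mem (sub_mem hv2 (Submodule.smul_mem _ _ hv1)) (Submodule.smul_mem _ _ hv)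
    have scale : ∀ (c : ℂ), c ≠ 0 → ∀ (e : Fin 3 → ℂ), c • e ∈ W → e ∈ W := by
      intro c hc e hce
      have := Submodule.smul_mem W c⁻¹ hce
      rwa [smul_smul, inv_mul_cancel₀ hc, one_smul] at this
    fin_cases i
    · show (Pi.single (0 : Fin 3) 1 : Fin 3 → ℂ) ∈ W
      have hvi' : v 0 ≠ 0 := hvi
      refine scale _ (mul_ne_zero (mul_ne_zero d12 d13) hvi') _ ?_
      have hw : ((x1 - x2) * (x1 - x3) * v 0) • (Pi.single (0 : Fin 3) 1 : Fin 3 → ℂ) =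
          G1.mulVec (G1.mulVec v) - (x2 + x3) • G1.mulVec v + (x2 * x3) • v := by
        rw [hG1v, hG1v v]
        funext j
        fin_cases j <;> simp [Matrix.vecHead, Matrix.vecTail] <;> ring
      rw [hw]; exact extract x2 x3
    · show (Pi.single (1 : Fin 3) 1 : Fin 3 → ℂ) ∈ W
      have hvi' : v 1 ≠ 0 := hvi
      refine scale _ (mul_ne_zero (mul_ne_zero d21 d23) hvi') _ ?_
      have hw : ((x2 - x1) * (x2 - x3) * v 1) • (Pi.single (1 : Fin 3) 1 : Fin 3 → ℂ) =
          G1.mulVec (G1.mulVec v) - (x1 + x3) • G1.mulVec v + (x1 * x3) • v := by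
        rw [hG1v, hG1v v]
        funext j
        fin_cases j <;> simp [Matrix.vecHead, Matrix.vecTail] <;> ring
      rw [hw]; exact extract x1 x3
    · show (Pi.single (2 : Fin 3) 1 : Fin 3 → ℂ) ∈ W
      have hvi' : v 2 ≠ 0 := hvi
      refine scale _ (mul_ne_zero (mul_ne_zero d31 d32) hvi') _ ?_
      have hw : ((x3 - x1) * (x3 - x2) * v 2) • (Pi.single (2 : Fin 3) 1 : Fin 3 → ℂ) =
          G1.mulVec (G1.mulVec v) - (x1 + x2) • G1.mulVec v + (x1 * x2) • v := by
        rw [hG1v, hG1v v]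
        funext j
        fin_cases j <;> simp [Matrix.vecHead, Matrix.vecTail] <;> ring
      rw [hw]; exact extract x1 x2
  have hΔ1 : Δ1 ≠ 0 := mul_ne_zero d21 d31
  have hΔ2 : Δ2 ≠ 0 := mul_ne_zero d12 d32
  have hΔ3 : Δ3 ≠ 0 := mul_ne_zero d13 d23
  have hall : ∀ i : Fin 3, (Pi.single i 1 : Fin 3 → ℂ) ∈ W →
      ∀ j : Fin 3, (Pi.single j 1 : Fin 3 → ℂ) ∈ W := by
    intro i hi
    fin_cases i
    · have hu := hm2 _ hi
      have h01 : (Pi.single (1 : Fin 3) 1 : Fin 3 → ℂ) ∈ W := by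
        refine key _ hu 1 ?_
        simp [G2, Matrix.mulVec, dotProduct, Fin.sum_univ_three]
        exact ⟨⟨h3, hI2⟩, hΔ2⟩
      have h02 : (Pi.single (2 : Fin 3) 1 : Fin 3 → ℂ) ∈ W := by
        refine key _ hu 2 ?_
        simp [G2, Matrix.mulVec, dotProduct, Fin.sum_univ_three]
        exact ⟨⟨h2, hI3⟩, hΔ3⟩
      intro j; fin_cases j <;> assumption
    · have hu := hm2 _ hi
      have h10 : (Pi.single (0 : Fin 3) 1 : Fin 3 → ℂ) ∈ W := by
        refine key _ hu 0 ?_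
        simp [G2, Matrix.mulVec, dotProduct, Fin.sum_univ_three]
        exact ⟨⟨h3, hI1⟩, hΔ1⟩
      have h12' : (Pi.single (2 : Fin 3) 1 : Fin 3 → ℂ) ∈ W := by
        refine key _ hu 2 ?_
        simp [G2, Matrix.mulVec, dotProduct, Fin.sum_univ_three]
        exact ⟨⟨h1, hI3⟩, hΔ3⟩
      intro j; fin_cases j <;> assumption
    · have hu := hm2 _ hi
      have h20 : (Pi.single (0 : Fin 3) 1 : Fin 3 → ℂ) ∈ W := by
        refine key _ hu 0 ?_
        simp [G2, Matrix.mulVec, dotProduct, Fin.sum_univ_three]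
        exact ⟨⟨h2, hI1⟩, hΔ1⟩
      have h21 : (Pi.single (1 : Fin 3) 1 : Fin 3 → ℂ) ∈ W := by
        refine key _ hu 1 ?_
        simp [G2, Matrix.mulVec, dotProduct, Fin.sum_univ_three]
        exact ⟨⟨h1, hI2⟩, hΔ2⟩
      intro j; fin_cases j <;> assumption
  obtain ⟨v, hv, hvne⟩ := (Submodule.ne_bot_iff W).mp hbot
  obtain ⟨i, hvi⟩ := Function.ne_iff.mp hvne
  have hbasis := hall i (key v hv i (by simpa using hvi))
  apply Submodule.eq_top_iff'.mpr
  intro u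
  have hu : u = u 0 • (Pi.single (0 : Fin 3) 1 : Fin 3 → ℂ)
      + u 1 • (Pi.single (1 : Fin 3) 1 : Fin 3 → ℂ)
      + u 2 • (Pi.single (2 : Fin 3) 1 : Fin 3 → ℂ) := by
    funext j; fin_cases j <;> simp
  rw [hu]
  exact add_mem (add_mem (Submodule.smul_mem _ _ (hbasis 0)) (Submodule.smul_mem _ _ (hbasis 1)))
    (Submodule.smul_mem _ _ (hbasis 2))
end
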